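/- Let Σ=(Γ=(V,E),σ) be a signed graph and n ≥ 1 an integer. Then the number χ_Σ(2n+1) of proper n-colorings of Σ satisfies χ_Σ(2n+1) = (−1)^{|V|−k(Γ)} · (2n+1)^{k(Γ)} · T_Σ(−2n, 0, 2n/(2n+1)), and the number χ*_Σ(2n) of proper non-zero n-colorings of Σ satisfies χ*_Σ(2n) = (−1)^{|V|−k(Γ)} · (2n)^{k(Γ)} · T_Σ(1−2n, 0, 1), where k(Γ) is the number of connected components of Γ. -/

import Mathlib

attribute [local instance] Classical.propDecidable

noncomputable section SignedGraphs

/-- A signed graph: a multigraph with ordered pairs of endpoints (the order is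
an artefact of the encoding) together with a sign `±1` on each edge. -/
structure SGraph (V : Type*) (E : Type*) where
  ends : E → V × V
  sign : E → ℤˣ

namespace SGraph

variable {V E : Type*}

/-- Endpoint of `e` on side `b`; a loop has both endpoints equal, but its two
half-edges are distinguished by the side `b`. -/
def endpt (Γ : SGraph V E) (e : E) (b : Bool) : V :=
  cond b (Γ.ends e).1 (Γ.ends e).2

/-- `e` is a loop of the underlying graph. -/
def IsLoop (Γ : SGraph V E) (e : E) : Prop := (Γ.ends e).1 = (Γ.ends e).2

/-- Walks in a signed multigraph: a step traverses an edge `e` in direction `d`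
(from the side-`d` endpoint to the other endpoint). -/
inductive Walk (Γ : SGraph V E) : V → V → Type _
  | nil (v : V) : Walk Γ v v
  | cons (e : E) (d : Bool) {w : V} (p : Walk Γ (Γ.endpt e (!d)) w) : Walk Γ (Γ.endpt e d) w

namespace Walk

variable {Γ : SGraph V E}

/-- The list of vertices visited by a walk (including the final one). -/
def verts : ∀ {u v : V}, Γ.Walk u v → List V
  | _, _, .nil x => [x]
  | _, _, .cons e d p => Γ.endpt e d :: p.verts

/-- The list of edges traversed by a walk. -/
def edges : ∀ {u v : V}, Γ.Walk u v → List E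
  | _, _, .nil _ => []
  | _, _, .cons e _ p => e :: p.edges

/-- The list of (edge, direction) steps of a walk. -/
def steps : ∀ {u v : V}, Γ.Walk u v → List (E × Bool)
  | _, _, .nil _ => []
  | _, _, .cons e d p => (e, d) :: p.steps

/-- The sources of the steps of a walk, i.e. all visited vertices except the last. -/
def srcs {u v : V} (W : Γ.Walk u v) : List V := W.verts.dropLast

/-- The sign of a walk: the product of the signs of its edges. -/
def sgn : ∀ {u v : V}, Γ.Walk u v → ℤˣ
  | _, _, .nil _ => 1
  | _, _, .cons e _ p => Γ.sign e * p.sgn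

/-- Concatenation of walks. -/
def append : ∀ {u v w : V}, Γ.Walk u v → Γ.Walk v w → Γ.Walk u w
  | _, _, _, .nil _, q => q
  | _, _, _, .cons e d p, q => .cons e d (p.append q)

/-- The sum `Σᵢ f(eᵢ)` of the values of `f` on the edges of the walk,
with multiplicity. -/
def edgeSum {G : Type*} [AddCommGroup G] (f : E → G) {u v : V} (W : Γ.Walk u v) : G :=
  (W.edges.map f).sum

/-- The sum `Σᵢ ω(vᵢ,eᵢ)·(Π_{j<i} σ(eⱼ))·f(eᵢ)` along a walk, where `ω(vᵢ,eᵢ)`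
is the value of `ω` on the half-edge by which the walk leaves `vᵢ`. -/
def tensionSum {G : Type*} [AddCommGroup G] (ω : E → Bool → ℤˣ) (f : E → G) :
    ∀ {u v : V}, Γ.Walk u v → G
  | _, _, .nil _ => 0
  | _, _, .cons e d p => ((ω e d : ℤ) • f e) + ((Γ.sign e : ℤ) • tensionSum ω f p)

/-- `Q` is the reverse of the walk `P`. -/
def IsReverseOf {u v : V} (Q : Γ.Walk v u) (P : Γ.Walk u v) : Prop :=
  Q.steps = P.steps.reverse.map fun s => (s.1, !s.2)

end Walk

/-- A closed walk is a cycle if it is nontrivial, visits no vertex twice and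
uses no edge twice. -/
def IsCycle (Γ : SGraph V E) {v : V} (W : Γ.Walk v v) : Prop :=
  W.edges ≠ [] ∧ W.srcs.Nodup ∧ W.edges.Nodup

/-- A balanced (positive) cycle. -/
def IsBalancedCycle (Γ : SGraph V E) {v : V} (W : Γ.Walk v v) : Prop :=
  Γ.IsCycle W ∧ W.sgn = 1

/-- An unbalanced (negative) cycle. -/
def IsUnbalancedCycle (Γ : SGraph V E) {v : V} (W : Γ.Walk v v) : Prop :=
  Γ.IsCycle W ∧ W.sgn = -1

/-- A nontrivial walk that is a simple path (all visited vertices distinct). -/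
def IsPathWalk (Γ : SGraph V E) {u v : V} (P : Γ.Walk u v) : Prop :=
  P.edges ≠ [] ∧ P.verts.Nodup

/-- A tight handcuff at `v`: two edge-disjoint unbalanced cycles sharing exactly
the vertex `v`. -/
def IsTightHandcuff (Γ : SGraph V E) {v : V} (C₁ C₂ : Γ.Walk v v) : Prop :=
  Γ.IsUnbalancedCycle C₁ ∧ Γ.IsUnbalancedCycle C₂ ∧
    (∀ x ∈ C₁.srcs, x ∈ C₂.srcs → x = v) ∧ ∀ e ∈ C₁.edges, e ∉ C₂.edges

/-- A loose handcuff: two vertex-disjoint unbalanced cycles `C₁` (at `u`) and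
`C₂` (at `w`) joined by a simple path `P` from `u` to `w` meeting the cycles
exactly in its endpoints. -/
def IsLooseHandcuff (Γ : SGraph V E) {u w : V} (C₁ : Γ.Walk u u) (P : Γ.Walk u w)
    (C₂ : Γ.Walk w w) : Prop :=
  Γ.IsUnbalancedCycle C₁ ∧ Γ.IsUnbalancedCycle C₂ ∧ Γ.IsPathWalk P ∧
    (∀ x ∈ C₁.srcs, x ∉ C₂.srcs) ∧
    (∀ x ∈ P.verts, x ∈ C₁.srcs → x = u) ∧
    (∀ x ∈ P.verts, x ∈ C₂.srcs → x = w) ∧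
    ∀ e ∈ P.edges, e ∉ C₁.edges ∧ e ∉ C₂.edges

/-- The canonical closed walks traversing a circuit of the signed graph:
a balanced cycle, a tight handcuff `C₁ * C₂`, or a loose handcuff
`C₁ * P * C₂ * P⁻¹` (the circuit path edges being used twice). -/
def IsBasicCircuitWalk (Γ : SGraph V E) {v : V} (W : Γ.Walk v v) : Prop :=
  Γ.IsBalancedCycle W ∨
    (∃ C₁ C₂ : Γ.Walk v v, Γ.IsTightHandcuff C₁ C₂ ∧ W = C₁.append C₂) ∨
    ∃ (w : V) (C₁ : Γ.Walk v v) (P : Γ.Walk v w) (C₂ : Γ.Walk w w) (Q : Γ.Walk w v),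
      Γ.IsLooseHandcuff C₁ P C₂ ∧ Q.IsReverseOf P ∧
        W = C₁.append (P.append (C₂.append Q))

/-- A circuit walk: a rotation of a basic circuit walk. -/
def IsCircuitWalk (Γ : SGraph V E) {v : V} (W : Γ.Walk v v) : Prop :=
  ∃ (u : V) (A : Γ.Walk u v) (B : Γ.Walk v u),
    W = B.append A ∧ Γ.IsBasicCircuitWalk (A.append B)

/-- `e` is a circuit path edge: it lies on the connecting path of an unbalanced
loose handcuff. -/
def IsCircuitPathEdge (Γ : SGraph V E) (e : E) : Prop :=
  ∃ (u w : V) (C₁ : Γ.Walk u u) (P : Γ.Walk u w) (C₂ : Γ.Walk w w),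
    Γ.IsLooseHandcuff C₁ P C₂ ∧ e ∈ P.edges

/-- Adjacency via an edge. -/
def Adj (Γ : SGraph V E) (a b : V) : Prop := ∃ e, Γ.ends e = (a, b) ∨ Γ.ends e = (b, a)

/-- The set of connected components. -/
def Components (Γ : SGraph V E) : Type _ := Quot Γ.Adj

/-- The connected component of a vertex. -/
def comp (Γ : SGraph V E) (v : V) : Γ.Components := Quot.mk _ v

/-- The number `k(Γ)` of connected components. -/
def kAll (Γ : SGraph V E) : ℕ := Nat.card Γ.Components

/-- A connected component is balanced if every cycle it contains is balanced. -/
def IsBalancedComponent (Γ : SGraph V E) (c : Γ.Components) : Prop :=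
  ∀ v : V, Γ.comp v = c → ∀ W : Γ.Walk v v, Γ.IsCycle W → W.sgn = 1

/-- The number `k_b(Σ)` of balanced connected components. -/
def kb (Γ : SGraph V E) : ℕ := Nat.card {c : Γ.Components // Γ.IsBalancedComponent c}

/-- The number `k_u(Σ)` of unbalanced connected components. -/
def ku (Γ : SGraph V E) : ℕ := Nat.card {c : Γ.Components // ¬ Γ.IsBalancedComponent c}

/-- A signed graph is balanced if all its cycles are balanced. -/
def Balanced (Γ : SGraph V E) : Prop :=
  ∀ (v : V) (W : Γ.Walk v v), Γ.IsCycle W → W.sgn = 1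

/-- A signed graph is connected if it has exactly one connected component. -/
def Connected (Γ : SGraph V E) : Prop := Γ.kAll = 1

/-- The spanning subgraph `Σ \ Aᶜ` with edge set `A`. -/
def restrict (Γ : SGraph V E) (A : Set E) : SGraph V A :=
  { ends := fun e => Γ.ends e, sign := fun e => Γ.sign e }

/-- The signed Tutte polynomial (as a function of `x`, `y`, `z`):
`T_Σ(X,Y,Z) = Σ_{A⊆E} (X−1)^{k(Σ\Aᶜ)−k(Σ)} (Y−1)^{|A|−|V|+k_b(Σ\Aᶜ)} (Z−1)^{k_u(Σ\Aᶜ)}`. -/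
def signedTutte {K : Type*} [CommRing K] (Γ : SGraph V E) (x y z : K) : K :=
  ∑ᶠ A : Finset E,
    (x - 1) ^ ((Γ.restrict (A : Set E)).kAll - Γ.kAll) *
      (y - 1) ^ ((A.card + (Γ.restrict (A : Set E)).kb) - Nat.card V) *
        (z - 1) ^ (Γ.restrict (A : Set E)).ku

/-- Deletion of an edge. -/
def deleteEdge (Γ : SGraph V E) (e : E) : SGraph V {e' : E // e' ≠ e} :=
  { ends := fun e' => Γ.ends e'.1, sign := fun e' => Γ.sign e'.1 }

/-- The relation identifying the two endpoints of `e`. -/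
def contractRel (Γ : SGraph V E) (e : E) (a b : V) : Prop := (a, b) = Γ.ends e

/-- Contraction of an edge: the two endpoints are identified and the edge is
deleted.  (For a loop this is just deletion, as the identification is trivial.) -/
def contract (Γ : SGraph V E) (e : E) : SGraph (Quot (Γ.contractRel e)) {e' : E // e' ≠ e} :=
  { ends := fun e' => (Quot.mk _ (Γ.ends e'.1).1, Quot.mk _ (Γ.ends e'.1).2),
    sign := fun e' => Γ.sign e'.1 }

/-- `e` is a bridge: its deletion increases the number of connected components. -/
def IsBridge (Γ : SGraph V E) (e : E) : Prop := Γ.kAll < (Γ.deleteEdge e).kAll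

/-- An orientation of the half-edges, compatible with the signature. -/
def IsCompatible (Γ : SGraph V E) (ω : E → Bool → ℤˣ) : Prop :=
  ∀ e, Γ.sign e = -(ω e true * ω e false)

/-- A `G`-flow: Kirchhoff's law holds at every vertex. -/
def IsFlow (Γ : SGraph V E) (ω : E → Bool → ℤˣ) {G : Type*} [AddCommGroup G]
    (f : E → G) : Prop :=
  ∀ v : V,
    (∑ᶠ e : E, ((if Γ.endpt e true = v then (ω e true : ℤ) • f e else 0) +
      (if Γ.endpt e false = v then (ω e false : ℤ) • f e else 0))) = 0

/-- A `G`-tension: the alternating sum along every circuit walk vanishes. -/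
def IsTension (Γ : SGraph V E) (ω : E → Bool → ℤˣ) {G : Type*} [AddCommGroup G]
    (f : E → G) : Prop :=
  ∀ (v : V) (W : Γ.Walk v v), Γ.IsCircuitWalk W → W.tensionSum ω f = 0

end SGraph

/-- The doubling homomorphism `x ↦ x + x = 2x` of an abelian group. -/
def doubleHom (G : Type*) [AddCommGroup G] : G →+ G :=
  AddMonoidHom.mk' (fun x => x + x) (fun a b => add_add_add_comm a b a b)

/-- The subgroup `2G = {2x : x ∈ G}`. -/
def twoG (G : Type*) [AddCommGroup G] : AddSubgroup G := (doubleHom G).range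

/-- The `2`-torsion subgroup `G₂ = {x ∈ G : 2x = 0}`. -/
def torsion2 (G : Type*) [AddCommGroup G] : AddSubgroup G := (doubleHom G).ker

namespace SGraph

variable {V E : Type*}

/-- A `G`-potential difference: a `G`-tension whose sum around every unbalanced
cycle lies in `2G`. -/
def IsPotentialDifference (Γ : SGraph V E) (ω : E → Bool → ℤˣ) {G : Type*} [AddCommGroup G]
    (f : E → G) : Prop :=
  Γ.IsTension ω f ∧
    ∀ (v : V) (W : Γ.Walk v v), Γ.IsUnbalancedCycle W → W.edgeSum f ∈ twoG G

end SGraph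

namespace SGraph

variable {V E : Type*}

/-- Proper coloring by elements of a set `X` with involution `ι`: adjacent
endpoints of a positive edge get different colors, and for a negative edge the
`ι`-image of one endpoint's color differs from the other endpoint's color. -/
def IsProperInvColoring (Γ : SGraph V E) {X : Type*} (ι : X → X) (f : V → X) : Prop :=
  ∀ e : E, (Γ.sign e = 1 → f ((Γ.ends e).1) ≠ f ((Γ.ends e).2)) ∧
    (Γ.sign e = -1 → ι (f ((Γ.ends e).1)) ≠ f ((Γ.ends e).2))

/-- A proper `G`-coloring: for every edge `e = uv`, `f(u) ≠ f(v)` if `e` is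
positive and `-f(u) ≠ f(v)` if `e` is negative, i.e. `σ(e)•f(u) ≠ f(v)`. -/
def IsProperColoring (Γ : SGraph V E) {G : Type*} [AddCommGroup G] (f : V → G) : Prop :=
  ∀ e : E, ((Γ.sign e : ℤ) • f ((Γ.ends e).1)) ≠ f ((Γ.ends e).2)

/-- Zaslavsky's proper `n`-coloring: colors in `{0, ±1, …, ±n}` with
`f(u) ≠ σ(e)·f(v)` for every edge `e = uv`. -/
def IsProperNColoring (Γ : SGraph V E) (n : ℕ) (f : V → ℤ) : Prop :=
  (∀ v, |f v| ≤ (n : ℤ)) ∧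
    ∀ e : E, f ((Γ.ends e).1) ≠ (Γ.sign e : ℤ) * f ((Γ.ends e).2)

/-- `T ⊆ E` is a spanning tree: the spanning subgraph `(V,T)` is connected and
contains no cycle. -/
def IsSpanningTree (Γ : SGraph V E) (T : Set E) : Prop :=
  (Γ.restrict T).Connected ∧
    ∀ (v : V) (W : (Γ.restrict T).Walk v v), ¬ (Γ.restrict T).IsCycle W

/-- A connected basis of a connected signed graph: a spanning tree if `Σ` is
balanced; otherwise a spanning tree plus one extra edge closing an unbalanced
cycle. -/
def IsConnectedBasis (Γ : SGraph V E) (B : Set E) : Prop :=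
  (Γ.Balanced ∧ Γ.IsSpanningTree B) ∨
    (¬ Γ.Balanced ∧ ∃ (T : Set E) (e : E), Γ.IsSpanningTree T ∧ e ∉ T ∧ B = insert e T ∧
      ∀ (v : V) (W : (Γ.restrict B).Walk v v), (Γ.restrict B).IsCycle W → W.sgn = -1)

/-- Switching at a vertex `v`: the sign of every non-loop edge incident with `v`
is negated; loops keep their sign. -/
def switchAt (Γ : SGraph V E) (v : V) : SGraph V E :=
  { ends := Γ.ends,
    sign := fun e => if ((Γ.ends e).1 = v ↔ (Γ.ends e).2 = v) then Γ.sign e else -Γ.sign e }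

/-- Switching at a set `S` of vertices (the composite of the switchings at the
vertices of `S`): the sign of an edge is negated iff exactly one of its
endpoints lies in `S`. -/
def switchSet (Γ : SGraph V E) (S : Set V) : SGraph V E :=
  { ends := Γ.ends,
    sign := fun e => if ((Γ.ends e).1 ∈ S ↔ (Γ.ends e).2 ∈ S) then Γ.sign e else -Γ.sign e }

/-- Isomorphism of signed graphs (as undirected signed multigraphs). -/
def Iso {V₁ E₁ V₂ E₂ : Type*} (Γ₁ : SGraph V₁ E₁) (Γ₂ : SGraph V₂ E₂) : Prop :=
  ∃ (φ : V₁ ≃ V₂) (ψ : E₁ ≃ E₂), ∀ e : E₁,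
    (Γ₂.ends (ψ e) = (φ (Γ₁.ends e).1, φ (Γ₁.ends e).2) ∨
      Γ₂.ends (ψ e) = (φ (Γ₁.ends e).2, φ (Γ₁.ends e).1)) ∧
    Γ₂.sign (ψ e) = Γ₁.sign e

/-- Switching equivalence: isomorphism after switching at a set of vertices. -/
def SwitchEquiv {V₁ E₁ V₂ E₂ : Type*} (Γ₁ : SGraph V₁ E₁) (Γ₂ : SGraph V₂ E₂) : Prop :=
  ∃ S : Set V₁, Iso (Γ₁.switchSet S) Γ₂

/-- Disjoint union of signed graphs. -/
def disjUnion {V₁ E₁ V₂ E₂ : Type*} (Γ₁ : SGraph V₁ E₁) (Γ₂ : SGraph V₂ E₂) :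
    SGraph (V₁ ⊕ V₂) (E₁ ⊕ E₂) where
  ends := fun e => match e with
    | .inl e => (Sum.inl (Γ₁.ends e).1, Sum.inl (Γ₁.ends e).2)
    | .inr e => (Sum.inr (Γ₂.ends e).1, Sum.inr (Γ₂.ends e).2)
  sign := fun e => match e with
    | .inl e => Γ₁.sign e
    | .inr e => Γ₂.sign e

/-- The difference operator `δ : G^V → G^E`,
`(δg)(e) = ω(v,e)·g(v) + ω(u,e)·g(u)` for `e = uv`. -/
def deltaHom (Γ : SGraph V E) (ω : E → Bool → ℤˣ) (G : Type*) [AddCommGroup G] :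
    (V → G) →+ (E → G) :=
  AddMonoidHom.mk'
    (fun g e => (ω e true : ℤ) • g ((Γ.ends e).1) + (ω e false : ℤ) • g ((Γ.ends e).2))
    (by
      intro a b
      funext e
      simp only [Pi.add_apply, smul_add]
      abel)

end SGraph

end SignedGraphs

/-!
An edge `e = uv` is improper for `f` exactly when `f(u) = σ(e) f(v)`. Inclusion–exclusion over
the set `A` of improper edges writes the number of proper colorings with values in a finite set
`S = -S` as `Σ_A (-1)^|A| h(A)`, where `h(A)` counts the maps `V → S` for which every edge of `A`
is improper. Such a map is determined, through the signs of walks, by its values at one vertex of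
each balanced component of `(V, A)`, and it vanishes on the unbalanced components, where `f = -f`.
Hence `h(A) = |S|^{k_b(A)} · [0 ∈ S]^{k_u(A)}`, and for `S = {0, ±1, …, ±n}` and
`S = {±1, …, ±n}` the alternating sum is, term by term, the expansion of the signed Tutte
polynomial. The exponents of that expansion are truncated differences; they are the true ones
because `k(Σ) ≤ k(Σ \ Aᶜ)` and `|V| ≤ |A| + k_b(Σ \ Aᶜ)`, the latter a rank count.
-/

open Finset

lemma card_and_forall_not_eq_sum {α ι : Type*} [Fintype ι] (Q : α → Prop) [Finite {x // Q x}]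
    (P : ι → α → Prop) :
    (Nat.card {x // Q x ∧ ∀ i, ¬ P i x} : ℤ) =
      ∑ t : Finset ι, (-1) ^ #t * (Nat.card {x // Q x ∧ ∀ i ∈ t, P i x} : ℤ) := by
  have := Fintype.ofFinite {x // Q x}
  let B (i : ι) : Finset {x // Q x} := univ.filter fun y => P i y.1
  have hcard (R : α → Prop) :
      Nat.card {x // Q x ∧ R x} = #(univ.filter fun y : {x // Q x} => R y.1) := by
    rw [← Nat.card_eq_finsetCard]
    exact Nat.card_congr ((Equiv.subtypeSubtypeEquivSubtypeInter Q R).symm.trans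
      (Equiv.subtypeEquivRight (by simp)))
  have h := inclusion_exclusion_card_inf_compl univ B
  rw [powerset_univ] at h
  rw [hcard]
  convert h using 3 with t
  · ext; simp [mem_inf, B]
  · rw [hcard]
    congr
    ext; simp [mem_inf, B]

/-- A summand of `(-1)^(|V| - k(Σ)) q^k(Σ) T_Σ(1 - q, 0, z)`, with `nV = |V|`, `K = k(Σ)`,
`a = |A|`, and `k`, `kb`, `ku` the component counts of `Σ \ Aᶜ`. -/
lemma mul_tutte_summand_eq {q z c : ℚ} (hz : q * (1 - z) = c) {nV k K kb ku a : ℕ}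
    (hKn : K ≤ nV) (hKk : K ≤ k) (hn : nV ≤ a + kb) (hk : kb + ku = k) :
    (-1) ^ (nV - K) * q ^ K * ((1 - q - 1) ^ (k - K) * (0 - 1) ^ (a + kb - nV) * (z - 1) ^ ku) =
      (-1) ^ a * (q ^ kb * c ^ ku) := by
  subst hz
  obtain ⟨i, rfl⟩ := Nat.exists_eq_add_of_le hKn
  obtain ⟨j, rfl⟩ := Nat.exists_eq_add_of_le hKk
  obtain ⟨m, hm⟩ := Nat.exists_eq_add_of_le hn
  have hpar : i + j + m + ku = a + 2 * j := by omega
  rw [hm]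
  simp only [Nat.add_sub_cancel_left]
  rw [show 1 - q - 1 = -1 * q by ring, show z - 1 = -1 * (1 - z) by ring, mul_pow, mul_pow,
    mul_pow]
  calc _ = (-1) ^ (i + j + m + ku) * q ^ (K + j) * (1 - z) ^ ku := by ring
    _ = _ := by rw [hpar, ← hk, pow_add, pow_mul, neg_one_sq, one_pow]; ring

lemma card_forall_mem {β : Type*} (α : Type*) [Finite α] (S : Finset β) :
    Nat.card {x : α → β // ∀ a, x a ∈ S} = #S ^ Nat.card α := by
  rw [Nat.card_congr Equiv.subtypePiEquivPi, Nat.card_fun, ← Nat.card_eq_finsetCard]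

namespace SGraph

variable {V E : Type*} {Γ : SGraph V E}

namespace Walk

lemma verts_ne_nil : ∀ {u v : V} (W : Γ.Walk u v), W.verts ≠ []
  | _, _, .nil _ => by simp [verts]
  | _, _, .cons _ _ _ => by simp [verts]

@[simp] lemma srcs_nil (v : V) : (Walk.nil (Γ := Γ) v).srcs = [] := rfl

@[simp] lemma verts_nil (v : V) : (Walk.nil (Γ := Γ) v).verts = [v] := rfl

@[simp] lemma edges_nil (v : V) : (Walk.nil (Γ := Γ) v).edges = [] := rfl

@[simp] lemma sgn_nil (v : V) : (Walk.nil (Γ := Γ) v).sgn = 1 := rfl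

@[simp] lemma verts_cons (e : E) (d : Bool) {w : V} (p : Γ.Walk (Γ.endpt e (!d)) w) :
    (Walk.cons e d p).verts = Γ.endpt e d :: p.verts := rfl

@[simp] lemma edges_cons (e : E) (d : Bool) {w : V} (p : Γ.Walk (Γ.endpt e (!d)) w) :
    (Walk.cons e d p).edges = e :: p.edges := rfl

@[simp] lemma sgn_cons (e : E) (d : Bool) {w : V} (p : Γ.Walk (Γ.endpt e (!d)) w) :
    (Walk.cons e d p).sgn = Γ.sign e * p.sgn := rfl

@[simp] lemma srcs_cons (e : E) (d : Bool) {w : V} (p : Γ.Walk (Γ.endpt e (!d)) w) :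
    (Walk.cons e d p).srcs = Γ.endpt e d :: p.srcs := by
  rw [srcs, verts_cons, List.dropLast_cons_of_ne_nil (verts_ne_nil p)]; rfl

@[simp] lemma cons_append (e : E) (d : Bool) {w u : V} (p : Γ.Walk (Γ.endpt e (!d)) w)
    (q : Γ.Walk w u) : (Walk.cons e d p).append q = Walk.cons e d (p.append q) := rfl

lemma edges_append : ∀ {u v w : V} (p : Γ.Walk u v) (q : Γ.Walk v w),
    (p.append q).edges = p.edges ++ q.edges
  | _, _, _, .nil _, _ => rfl
  | _, _, _, .cons e d p, q => by simp [edges_append p q]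

lemma sgn_append : ∀ {u v w : V} (p : Γ.Walk u v) (q : Γ.Walk v w),
    (p.append q).sgn = p.sgn * q.sgn
  | _, _, _, .nil _, _ => (one_mul _).symm
  | _, _, _, .cons e d p, q => by simp [sgn_append p q, mul_assoc]

lemma verts_append : ∀ {u v w : V} (p : Γ.Walk u v) (q : Γ.Walk v w),
    (p.append q).verts = p.srcs ++ q.verts
  | _, _, _, .nil _, _ => rfl
  | _, _, _, .cons e d p, q => by simp [verts_append p q]

lemma srcs_append {u v w : V} (p : Γ.Walk u v) (q : Γ.Walk v w) :
    (p.append q).srcs = p.srcs ++ q.srcs := by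
  rw [srcs, verts_append, List.dropLast_append_of_ne_nil (verts_ne_nil q)]; rfl

lemma eq_of_edges_eq_nil : ∀ {u v : V} (W : Γ.Walk u v), W.edges = [] →
    u = v ∧ W.sgn = 1 ∧ W.srcs = []
  | _, _, .nil _, _ => ⟨rfl, rfl, rfl⟩
  | _, _, .cons e d p, h => by simp at h

lemma start_mem_srcs : ∀ {u v : V} (W : Γ.Walk u v), W.edges ≠ [] → u ∈ W.srcs
  | _, _, .nil _, h => absurd rfl h
  | _, _, .cons e d p, _ => by simp

lemma edges_ne_nil_of_mem_srcs {u v x : V} (W : Γ.Walk u v) (h : x ∈ W.srcs) :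
    W.edges ≠ [] := fun h0 => by
  simp [(eq_of_edges_eq_nil W h0).2.2] at h

end Walk

def reverseStep (Γ : SGraph V E) (e : E) : (d : Bool) → Γ.Walk (Γ.endpt e (!d)) (Γ.endpt e d)
  | true => .cons e false (.nil _)
  | false => .cons e true (.nil _)

@[simp] lemma sgn_reverseStep (e : E) (d : Bool) : (Γ.reverseStep e d).sgn = Γ.sign e := by
  cases d <;> simp [reverseStep]

namespace Walk

def reverse : ∀ {u v : V}, Γ.Walk u v → Γ.Walk v u
  | _, _, .nil x => .nil x
  | _, _, .cons e d p => p.reverse.append (Γ.reverseStep e d)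

@[simp] lemma sgn_reverse : ∀ {u v : V} (W : Γ.Walk u v), W.reverse.sgn = W.sgn
  | _, _, .nil _ => rfl
  | _, _, .cons e d p => by
    rw [reverse, sgn_append, sgn_reverse p, sgn_reverseStep, sgn_cons, mul_comm]

lemma exists_append_of_mem_verts {a b u : V} (W : Γ.Walk a b) (hu : u ∈ W.verts) :
    ∃ (p : Γ.Walk a u) (q : Γ.Walk u b), W = p.append q ∧ u ∉ p.srcs := by
  induction W with
  | nil x =>
    obtain rfl : u = x := by simpa using hu
    exact ⟨.nil u, .nil u, rfl, by simp⟩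
  | cons e d p ih =>
    by_cases h : u = Γ.endpt e d
    · subst h
      exact ⟨.nil _, .cons e d p, rfl, by simp⟩
    · obtain ⟨p₁, p₂, rfl, hns⟩ := ih (by simpa [h] using hu)
      exact ⟨.cons e d p₁, p₂, rfl, by simp [h, hns]⟩

lemma exists_append_of_mem_srcs {a b u : V} (W : Γ.Walk a b) (hu : u ∈ W.srcs) :
    ∃ (p : Γ.Walk a u) (q : Γ.Walk u b), W = p.append q ∧ u ∉ p.srcs ∧ u ∈ q.srcs := by
  obtain ⟨p, q, rfl, h⟩ := exists_append_of_mem_verts W ((List.dropLast_sublist _).mem hu)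
  rw [srcs_append] at hu
  exact ⟨p, q, rfl, h, (List.mem_append.mp hu).resolve_left h⟩

lemma exists_append_of_edge_mem {a b : V} (W : Γ.Walk a b) {e : E} (he : e ∈ W.edges) :
    ∃ (d : Bool) (p : Γ.Walk a (Γ.endpt e d)) (q : Γ.Walk (Γ.endpt e (!d)) b),
      W = p.append (.cons e d q) ∧ e ∉ p.edges := by
  induction W with
  | nil x => simp at he
  | cons e' d' p ih =>
    by_cases h : e' = e
    · subst h
      exact ⟨d', .nil _, p, rfl, by simp⟩
    · obtain ⟨d, p₁, q, rfl, hne⟩ := ih (by simpa [Ne.symm h] using he)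
      exact ⟨d, .cons e' d' p₁, q, rfl, by simp [Ne.symm h, hne]⟩

lemma exists_closed_of_not_nodup {v : V} (W : Γ.Walk v v) (h : ¬ W.srcs.Nodup) :
    ∃ (u : V) (p : Γ.Walk v u) (r : Γ.Walk u u) (s : Γ.Walk u v),
      W = p.append (r.append s) ∧ r.edges ≠ [] ∧ s.edges ≠ [] := by
  obtain ⟨u, hu⟩ : ∃ u, 1 < W.srcs.count u := by
    simpa [List.nodup_iff_count_le_one] using h
  obtain ⟨p, q, rfl, hup, -⟩ :=
    exists_append_of_mem_srcs W (u := u) (List.count_pos_iff.mp (by omega))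
  rw [srcs_append, List.count_append, List.count_eq_zero_of_not_mem hup, zero_add] at hu
  cases q with
  | nil => simp at hu
  | cons e d q =>
    rw [srcs_cons, List.count_cons_self] at hu
    obtain ⟨r, s, rfl, -, hs⟩ :=
      exists_append_of_mem_srcs q (u := Γ.endpt e d) (List.count_pos_iff.mp (by omega))
    exact ⟨_, p, .cons e d r, s, rfl, by simp, edges_ne_nil_of_mem_srcs s hs⟩

/-- With distinct sources, a repeated edge forces the walk to be `e` traversed back
and forth, whose sign is `σ(e)² = 1`. -/
lemma edges_nodup_of_srcs_nodup {v : V} (W : Γ.Walk v v) (h1 : W.srcs.Nodup)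
    (h2 : W.sgn = -1) : W.edges.Nodup := by
  by_contra hnd
  obtain ⟨e, he⟩ : ∃ e, 1 < W.edges.count e := by
    simpa [List.nodup_iff_count_le_one] using hnd
  obtain ⟨d, p, q, rfl, hep⟩ :=
    exists_append_of_edge_mem W (e := e) (List.count_pos_iff.mp (by omega))
  rw [edges_append, edges_cons, List.count_append, List.count_cons_self,
    List.count_eq_zero_of_not_mem hep] at he
  obtain ⟨d', r, s, rfl, -⟩ :=
    exists_append_of_edge_mem q (e := e) (List.count_pos_iff.mp (by omega))
  rw [srcs_append, srcs_cons, srcs_append, srcs_cons] at h1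
  rw [sgn_append, sgn_cons, sgn_append, sgn_cons] at h2
  obtain ⟨-, h1, hdisj⟩ := List.nodup_append.mp h1
  obtain ⟨hhead, h1⟩ := List.nodup_cons.mp h1
  obtain ⟨-, -, hdisj2⟩ := List.nodup_append.mp h1
  cases d <;> cases d'
  case false.false | true.true => exact hhead (List.mem_append_right _ List.mem_cons_self)
  all_goals
    have hr : r.edges = [] := by_contra fun h =>
      hdisj2 _ (start_mem_srcs r h) _ List.mem_cons_self rfl
    have hs : s.edges = [] := by_contra fun h =>
      hhead (List.mem_append_right _ (List.mem_cons_of_mem _ (start_mem_srcs s h)))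
    obtain ⟨hsv, hs1, -⟩ := eq_of_edges_eq_nil s hs
    have hp : p.edges = [] := by_contra fun h =>
      hdisj _ (start_mem_srcs p h) _ (List.mem_cons.mpr (Or.inl hsv.symm)) rfl
    rw [(eq_of_edges_eq_nil r hr).2.1, hs1, (eq_of_edges_eq_nil p hp).2.1] at h2
    simp [Int.units_mul_self] at h2

lemma exists_isCycle_sgn_eq_neg_one {v : V} (W : Γ.Walk v v) (hW : W.sgn = -1) :
    ∃ (u : V) (_ : Γ.Walk v u) (C : Γ.Walk u u), Γ.IsCycle C ∧ C.sgn = -1 := by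
  induction hk : W.edges.length using Nat.strong_induction_on generalizing v with
  | _ k ih =>
    by_cases hnd : W.srcs.Nodup
    · refine ⟨v, .nil v, W, ⟨fun h0 => ?_, hnd, edges_nodup_of_srcs_nodup W hnd hW⟩, hW⟩
      simp [(eq_of_edges_eq_nil W h0).2.1] at hW
    · obtain ⟨u, p, r, s, rfl, hre, hse⟩ := exists_closed_of_not_nodup W hnd
      simp only [edges_append, List.length_append] at hk
      have hr := List.length_pos_iff.mpr hre
      have hs := List.length_pos_iff.mpr hse
      rw [sgn_append, sgn_append] at hW
      rcases Int.units_eq_one_or r.sgn with h | h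
      · -- the closed walk `p s` carries the sign of `W`
        refine ih _ ?_ (p.append s) (by simpa [sgn_append, h] using hW) rfl
        simp only [edges_append, List.length_append]
        omega
      · obtain ⟨u', w, C, hC⟩ := ih _ (by omega) r h rfl
        exact ⟨u', p.append w, C, hC⟩

end Walk

lemma comp_eq_of_walk : ∀ {u v : V}, Γ.Walk u v → Γ.comp u = Γ.comp v
  | _, _, .nil _ => rfl
  | _, _, .cons e d p => by
    refine Eq.trans (Quot.sound ⟨e, ?_⟩) (comp_eq_of_walk p)
    cases d <;> simp [endpt]

lemma comp_fst_eq_comp_snd (e : E) : Γ.comp (Γ.ends e).1 = Γ.comp (Γ.ends e).2 :=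
  Quot.sound ⟨e, Or.inl rfl⟩

lemma nonempty_walk_of_adj {a b : V} (h : Γ.Adj a b) : Nonempty (Γ.Walk a b) := by
  obtain ⟨e, h | h⟩ := h
  · have h₁ : Γ.endpt e true = a := by simp [endpt, h]
    have h₂ : Γ.endpt e false = b := by simp [endpt, h]
    exact ⟨h₁ ▸ h₂ ▸ .cons e true (.nil _)⟩
  · have h₁ : Γ.endpt e false = a := by simp [endpt, h]
    have h₂ : Γ.endpt e true = b := by simp [endpt, h]
    exact ⟨h₁ ▸ h₂ ▸ Γ.reverseStep e true⟩

lemma nonempty_walk_iff_comp_eq {u v : V} : Nonempty (Γ.Walk u v) ↔ Γ.comp u = Γ.comp v := by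
  refine ⟨fun ⟨W⟩ => comp_eq_of_walk W, fun h => ?_⟩
  have step : ∀ a b, Γ.Adj a b → Nonempty (Γ.Walk u a) = Nonempty (Γ.Walk u b) := by
    intro a b hab
    obtain ⟨w⟩ := nonempty_walk_of_adj hab
    exact propext ⟨fun ⟨W⟩ => ⟨W.append w⟩, fun ⟨W⟩ => ⟨W.append w.reverse⟩⟩
  exact (congrArg (Quot.lift (fun w => Nonempty (Γ.Walk u w)) step) h).mp ⟨.nil u⟩

lemma sgn_eq_one_of_isBalancedComponent {v : V} (hbal : Γ.IsBalancedComponent (Γ.comp v))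
    (W : Γ.Walk v v) : W.sgn = 1 := by
  refine (Int.units_eq_one_or W.sgn).resolve_right fun hW => ?_
  obtain ⟨u, p, C, hC, hCs⟩ := W.exists_isCycle_sgn_eq_neg_one hW
  simp [hbal u (comp_eq_of_walk p).symm C hC] at hCs

lemma sgn_eq_sgn_of_isBalancedComponent {u v : V} (hbal : Γ.IsBalancedComponent (Γ.comp v))
    (W₁ W₂ : Γ.Walk u v) : W₁.sgn = W₂.sgn := by
  have h :=
    sgn_eq_one_of_isBalancedComponent (comp_eq_of_walk W₁ ▸ hbal) (W₁.append W₂.reverse)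
  rw [Walk.sgn_append, Walk.sgn_reverse] at h
  rwa [mul_eq_one_iff_eq_inv, Int.units_inv_eq_self] at h

noncomputable def rep (Γ : SGraph V E) (c : Γ.Components) : V := (Quot.exists_rep c).choose

lemma comp_rep (Γ : SGraph V E) (c : Γ.Components) : Γ.comp (Γ.rep c) = c :=
  (Quot.exists_rep c).choose_spec

/-- The sign of a walk from the representative of the component of `v` to `v`; in a
balanced component it does not depend on the walk, and `σ(uv) = repSign u · repSign v`. -/
noncomputable def repSign (Γ : SGraph V E) (v : V) : ℤˣ :=
  (Classical.choice (nonempty_walk_iff_comp_eq.mpr (Γ.comp_rep (Γ.comp v)))).sgn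

lemma repSign_eq_sgn {v : V} (hbal : Γ.IsBalancedComponent (Γ.comp v))
    (W : Γ.Walk (Γ.rep (Γ.comp v)) v) : Γ.repSign v = W.sgn :=
  sgn_eq_sgn_of_isBalancedComponent hbal _ W

lemma repSign_rep {c : Γ.Components} (hbal : Γ.IsBalancedComponent c) :
    Γ.repSign (Γ.rep c) = 1 := by
  have hc := Γ.comp_rep c
  have key : ∀ W : Γ.Walk (Γ.rep (Γ.comp (Γ.rep c))) (Γ.rep c), W.sgn = 1 := by
    rw [hc]
    exact sgn_eq_one_of_isBalancedComponent (by rwa [hc])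
  exact key _

lemma repSign_fst {e : E} (hbal : Γ.IsBalancedComponent (Γ.comp (Γ.ends e).1)) :
    Γ.repSign (Γ.ends e).1 = Γ.sign e * Γ.repSign (Γ.ends e).2 := by
  have key : ∀ W : Γ.Walk (Γ.rep (Γ.comp (Γ.ends e).2)) (Γ.ends e).2,
      Γ.repSign (Γ.ends e).1 = W.sgn * Γ.sign e := by
    rw [← comp_fst_eq_comp_snd]
    intro W
    rw [repSign_eq_sgn hbal (W.append (Γ.reverseStep e true))]
    exact (Walk.sgn_append W (Γ.reverseStep e true)).trans
      (congrArg (W.sgn * ·) (sgn_reverseStep e true))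
  rw [key (Classical.choice (nonempty_walk_iff_comp_eq.mpr (Γ.comp_rep _))), mul_comm]
  rfl

instance finite_components (Γ : SGraph V E) [Finite V] : Finite Γ.Components :=
  Finite.of_surjective Γ.comp Quot.exists_rep

lemma kb_add_ku (Γ : SGraph V E) [Finite V] : Γ.kb + Γ.ku = Γ.kAll := by
  rw [kb, ku, kAll, ← Nat.card_sum, Nat.card_congr (Equiv.sumCompl _)]

lemma kAll_le_card (Γ : SGraph V E) [Finite V] : Γ.kAll ≤ Nat.card V :=
  Nat.card_le_card_of_surjective Γ.comp Quot.exists_rep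

lemma kAll_le_kAll_restrict (Γ : SGraph V E) [Finite V] (A : Set E) :
    Γ.kAll ≤ (Γ.restrict A).kAll := by
  refine Nat.card_le_card_of_surjective (Quot.lift Γ.comp ?_) fun c => ?_
  · rintro a b ⟨e, he⟩
    exact Quot.sound ⟨e.1, he⟩
  · obtain ⟨v, rfl⟩ := Quot.exists_rep c
    exact ⟨(Γ.restrict A).comp v, rfl⟩

lemma ku_eq_zero_iff [Finite V] : Γ.ku = 0 ↔ ∀ c, Γ.IsBalancedComponent c := by
  simp [ku, Finite.card_eq_zero_iff, isEmpty_subtype]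

section Harmonic

variable {G : Type*} [AddCommGroup G]

/-- Every edge is improper for `f`. -/
def IsHarmonic (Γ : SGraph V E) (f : V → G) : Prop :=
  ∀ e, f (Γ.ends e).1 = Γ.sign e • f (Γ.ends e).2

lemma units_smul_units_smul (u : ℤˣ) (x : G) : u • u • x = x := by
  rw [smul_smul, Int.units_mul_self, one_smul]

namespace IsHarmonic

variable {f : V → G}

lemma apply_endpt (hf : Γ.IsHarmonic f) (e : E) :
    ∀ d, f (Γ.endpt e d) = Γ.sign e • f (Γ.endpt e (!d))
  | true => hf e
  | false => by simp [endpt, hf e, units_smul_units_smul]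

lemma apply_eq_sgn_smul (hf : Γ.IsHarmonic f) :
    ∀ {u v : V} (W : Γ.Walk u v), f u = W.sgn • f v
  | _, _, .nil _ => by simp
  | _, _, .cons e d p => by rw [hf.apply_endpt e d, hf.apply_eq_sgn_smul p, Walk.sgn_cons, mul_smul]

/-- On an unbalanced component `f = -f`, which forces `f = 0` without `2`-torsion. -/
lemma apply_eq_zero [IsAddTorsionFree G] (hf : Γ.IsHarmonic f) {v : V}
    (hbal : ¬ Γ.IsBalancedComponent (Γ.comp v)) : f v = 0 := by
  simp only [IsBalancedComponent, not_forall] at hbal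
  obtain ⟨w, hw, W, -, hW⟩ := hbal
  have hw0 : f w = 0 := by
    have h := hf.apply_eq_sgn_smul W
    rw [(Int.units_eq_one_or W.sgn).resolve_left hW, Units.neg_smul, one_smul,
      eq_neg_iff_add_eq_zero, ← two_nsmul] at h
    exact IsAddTorsionFree.nsmul_right_injective two_ne_zero (h.trans (nsmul_zero 2).symm)
  obtain ⟨W'⟩ := nonempty_walk_iff_comp_eq.mpr hw.symm
  rw [hf.apply_eq_sgn_smul W', hw0, smul_zero]

lemma apply_eq_repSign_smul (hf : Γ.IsHarmonic f) {v : V}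
    (hbal : Γ.IsBalancedComponent (Γ.comp v)) :
    f v = Γ.repSign v • f (Γ.rep (Γ.comp v)) := by
  obtain ⟨W⟩ := nonempty_walk_iff_comp_eq.mpr (Γ.comp_rep (Γ.comp v))
  rw [hf.apply_eq_sgn_smul W, repSign_eq_sgn hbal W, units_smul_units_smul]

end IsHarmonic

noncomputable def extendFromReps (Γ : SGraph V E)
    (x : {c : Γ.Components // Γ.IsBalancedComponent c} → G) (v : V) : G :=
  if h : Γ.IsBalancedComponent (Γ.comp v) then Γ.repSign v • x ⟨Γ.comp v, h⟩ else 0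

lemma isHarmonic_extendFromReps (x : {c : Γ.Components // Γ.IsBalancedComponent c} → G) :
    Γ.IsHarmonic (Γ.extendFromReps x) := by
  intro e
  have hcomp := Γ.comp_fst_eq_comp_snd e
  by_cases h : Γ.IsBalancedComponent (Γ.comp (Γ.ends e).1)
  · have h' : Γ.IsBalancedComponent (Γ.comp (Γ.ends e).2) := hcomp ▸ h
    simp only [extendFromReps, dif_pos h, dif_pos h', repSign_fst h, mul_smul]
    congr 3
    exact Subtype.ext hcomp
  · have h' : ¬ Γ.IsBalancedComponent (Γ.comp (Γ.ends e).2) := hcomp ▸ h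
    simp only [extendFromReps, dif_neg h, dif_neg h', smul_zero]

lemma extendFromReps_rep (x : {c : Γ.Components // Γ.IsBalancedComponent c} → G)
    (c : {c : Γ.Components // Γ.IsBalancedComponent c}) :
    Γ.extendFromReps x (Γ.rep c.1) = x c := by
  have h : Γ.IsBalancedComponent (Γ.comp (Γ.rep c.1)) := by rw [Γ.comp_rep]; exact c.2
  simp only [extendFromReps, dif_pos h, repSign_rep c.2, one_smul]
  exact congrArg x (Subtype.ext (Γ.comp_rep c.1))

variable (G) in
noncomputable def harmonicEquiv (Γ : SGraph V E) [IsAddTorsionFree G] :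
    {f : V → G // Γ.IsHarmonic f} ≃
      ({c : Γ.Components // Γ.IsBalancedComponent c} → G) where
  toFun f c := f.1 (Γ.rep c.1)
  invFun x := ⟨Γ.extendFromReps x, isHarmonic_extendFromReps x⟩
  left_inv f := Subtype.ext <| funext fun v => by
    by_cases h : Γ.IsBalancedComponent (Γ.comp v)
    · simp only [extendFromReps, dif_pos h]
      exact (f.2.apply_eq_repSign_smul h).symm
    · simp only [extendFromReps, dif_neg h]
      exact (f.2.apply_eq_zero h).symm
  right_inv x := funext (extendFromReps_rep x)

lemma extendFromReps_mem_iff {S : Set G} (hS : ∀ x ∈ S, -x ∈ S)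
    (x : {c : Γ.Components // Γ.IsBalancedComponent c} → G) :
    (∀ v, Γ.extendFromReps x v ∈ S) ↔
      (∀ c, x c ∈ S) ∧ ((∃ c, ¬ Γ.IsBalancedComponent c) → 0 ∈ S) := by
  refine ⟨fun h => ⟨fun c => extendFromReps_rep x c ▸ h _, fun ⟨c, hc⟩ => ?_⟩,
    fun ⟨hx, h0⟩ v => ?_⟩
  · have hc' : ¬ Γ.IsBalancedComponent (Γ.comp (Γ.rep c)) := by rwa [Γ.comp_rep]
    simpa [extendFromReps, dif_neg hc'] using h (Γ.rep c)
  · by_cases hv : Γ.IsBalancedComponent (Γ.comp v)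
    · rw [extendFromReps, dif_pos hv]
      rcases Int.units_eq_one_or (Γ.repSign v) with h | h <;> rw [h]
      · simpa using hx _
      · simpa [Units.neg_smul] using hS _ (hx _)
    · simpa [extendFromReps, dif_neg hv] using h0 ⟨_, hv⟩

lemma card_harmonic_mem [Finite V] [IsAddTorsionFree G] (S : Finset G)
    (hS : ∀ x ∈ S, -x ∈ S) :
    Nat.card {f : V → G // (∀ v, f v ∈ S) ∧ Γ.IsHarmonic f} =
      #S ^ Γ.kb * (if (0 : G) ∈ S then 1 else 0) ^ Γ.ku := by
  have e : {f : V → G // (∀ v, f v ∈ S) ∧ Γ.IsHarmonic f} ≃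
      {x : {c : Γ.Components // Γ.IsBalancedComponent c} → G //
        (∀ c, x c ∈ S) ∧ ((∃ c, ¬ Γ.IsBalancedComponent c) → 0 ∈ S)} :=
    (Equiv.subtypeEquivRight fun _ => and_comm).trans <|
      (Equiv.subtypeSubtypeEquivSubtypeInter Γ.IsHarmonic fun f => ∀ v, f v ∈ S).symm.trans
        ((Γ.harmonicEquiv G).symm.subtypeEquiv fun x =>
          (extendFromReps_mem_iff (S := (S : Set G)) hS x).symm).symm
  rw [Nat.card_congr e]
  by_cases h0 : (0 : G) ∈ S
  · simp only [h0, imp_true_iff, and_true, if_true, one_pow, mul_one]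
    exact card_forall_mem _ S
  by_cases hu : ∃ c, ¬ Γ.IsBalancedComponent c
  · have hku : Γ.ku ≠ 0 := fun h => by simp [ku_eq_zero_iff.mp h] at hu
    simp [h0, hu, zero_pow hku]
  · have hall : ∀ c, Γ.IsBalancedComponent c := by simpa using hu
    simp only [h0, hu, imp_false, not_false_eq_true, and_true, if_false, ku_eq_zero_iff.mpr hall,
      pow_zero, mul_one]
    exact card_forall_mem _ S

/-- The kernel of `δ(f)(uv) = f(u) - σ(uv) f(v)` on rational vertex functions consists of the
harmonic maps, a space of dimension `k_b`. -/
lemma card_le_card_add_kb (Γ : SGraph V E) [Finite V] [Finite E] :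
    Nat.card V ≤ Nat.card E + Γ.kb := by
  have := Fintype.ofFinite V
  have := Fintype.ofFinite E
  have := Fintype.ofFinite {c : Γ.Components // Γ.IsBalancedComponent c}
  let δ := (Γ.deltaHom (fun e b => if b then 1 else -Γ.sign e) ℚ).toRatLinearMap
  have hker : ∀ f, f ∈ LinearMap.ker δ ↔ Γ.IsHarmonic f := fun f => by
    simp [δ, deltaHom, IsHarmonic, funext_iff, Units.smul_def, add_neg_eq_zero]
  let ker :
      LinearMap.ker δ ≃ₗ[ℚ] ({c : Γ.Components // Γ.IsBalancedComponent c} → ℚ) :=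
    { (Equiv.subtypeEquivRight hker).trans (Γ.harmonicEquiv ℚ) with
      map_add' := fun _ _ => rfl
      map_smul' := fun _ _ => rfl }
  have hrank := LinearMap.finrank_range_add_finrank_ker δ
  have hrange := Submodule.finrank_le (LinearMap.range δ)
  rw [ker.finrank_eq, Module.finrank_fintype_fun_eq_card, Module.finrank_fintype_fun_eq_card]
    at hrank
  rw [Module.finrank_fintype_fun_eq_card] at hrange
  rw [kb, Nat.card_eq_fintype_card, Nat.card_eq_fintype_card, Nat.card_eq_fintype_card]
  omega

end Harmonic

lemma isHarmonic_restrict_iff (Γ : SGraph V E) (A : Set E) (f : V → ℤ) :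
    (Γ.restrict A).IsHarmonic f ↔
      ∀ e ∈ A, f (Γ.ends e).1 = Γ.sign e * f (Γ.ends e).2 := by
  simp [IsHarmonic, restrict, Units.smul_def]

theorem card_proper_colorings_eq_signedTutte [Finite V] [Finite E] (Γ : SGraph V E)
    (S : Finset ℤ) (hS : ∀ x ∈ S, -x ∈ S) (z : ℚ)
    (hz : (#S : ℚ) * (1 - z) = if (0 : ℤ) ∈ S then 1 else 0) :
    (Nat.card {f : V → ℤ // (∀ v, f v ∈ S) ∧
        ∀ e, f (Γ.ends e).1 ≠ Γ.sign e * f (Γ.ends e).2} : ℚ) =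
      (-1) ^ (Nat.card V - Γ.kAll) * (#S : ℚ) ^ Γ.kAll * Γ.signedTutte (1 - #S : ℚ) 0 z := by
  have := Fintype.ofFinite E
  have : Finite {f : V → ℤ // ∀ v, f v ∈ S} := Finite.of_equiv _ Equiv.subtypePiEquivPi.symm
  have hIE := card_and_forall_not_eq_sum (fun f : V → ℤ => ∀ v, f v ∈ S)
    fun e f => f (Γ.ends e).1 = Γ.sign e * f (Γ.ends e).2
  rw [signedTutte, finsum_eq_sum_of_fintype, mul_sum]
  rw [← Int.cast_natCast, hIE]
  push_cast
  refine sum_congr rfl fun A _ => ?_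
  have hA := (Γ.restrict A).card_harmonic_mem S hS
  simp only [isHarmonic_restrict_iff, mem_coe] at hA
  have hV := (Γ.restrict A).card_le_card_add_kb
  rw [Nat.card_coe_set_eq, Set.ncard_coe_finset] at hV
  rw [hA]
  push_cast
  exact (mul_tutte_summand_eq hz Γ.kAll_le_card (Γ.kAll_le_kAll_restrict _) hV
    ((Γ.restrict A).kb_add_ku)).symm

end SGraph

section Statement

open SGraph

theorem card_proper_n_colorings_general (V E : Type) [Finite V] [Finite E]
    (Γ : SGraph V E) (n : ℕ) :
    (Nat.card {f : V → ℤ // Γ.IsProperNColoring n f} : ℚ) =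
      (-1 : ℚ) ^ (Nat.card V - Γ.kAll) * (2 * (n : ℚ) + 1) ^ Γ.kAll *
        Γ.signedTutte (-(2 * (n : ℚ))) 0 ((2 * (n : ℚ)) / (2 * (n : ℚ) + 1)) ∧
    (Nat.card {f : V → ℤ // Γ.IsProperNColoring n f ∧ ∀ v : V, f v ≠ 0} : ℚ) =
      (-1 : ℚ) ^ (Nat.card V - Γ.kAll) * (2 * (n : ℚ)) ^ Γ.kAll *
        Γ.signedTutte (1 - 2 * (n : ℚ)) 0 1 := by
  have hcard : #(Icc (-n : ℤ) n) = 2 * n + 1 := by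
    simp only [Int.card_Icc]
    omega
  have hmem : (0 : ℤ) ∈ Icc (-n : ℤ) n := by simp
  constructor
  · have h := Γ.card_proper_colorings_eq_signedTutte (Icc (-n : ℤ) n)
      (by simp only [mem_Icc]; omega) (2 * n / (2 * n + 1))
      (by rw [hcard, if_pos hmem]; push_cast; field_simp; ring)
    rw [hcard] at h
    push_cast at h
    rw [show (-(2 * n : ℚ)) = 1 - (2 * n + 1) by ring, ← h]
    congr 1
    exact Nat.card_congr (Equiv.subtypeEquivRight fun f => by simp [IsProperNColoring, abs_le])
  · have h := Γ.card_proper_colorings_eq_signedTutte ((Icc (-n : ℤ) n).erase 0)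
      (by simp only [mem_erase, mem_Icc]; omega) 1 (by simp)
    rw [card_erase_of_mem hmem, hcard] at h
    push_cast at h
    rw [← h]
    congr 1
    exact Nat.card_congr (Equiv.subtypeEquivRight fun f => by
      simp [IsProperNColoring, abs_le, forall_and]; tauto)

/-- Corollary 6.3: the numbers of proper `n`-colorings and of proper non-zero
`n`-colorings of a signed graph as evaluations of the signed Tutte polynomial. -/
theorem card_proper_n_colorings (V E : Type) [Finite V] [Finite E]
    (Γ : SGraph V E) (n : ℕ) (hn : 1 ≤ n) :
    (Nat.card {f : V → ℤ // Γ.IsProperNColoring n f} : ℚ) =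
      (-1 : ℚ) ^ (Nat.card V - Γ.kAll) * (2 * (n : ℚ) + 1) ^ Γ.kAll *
        Γ.signedTutte (-(2 * (n : ℚ))) 0 ((2 * (n : ℚ)) / (2 * (n : ℚ) + 1)) ∧
    (Nat.card {f : V → ℤ // Γ.IsProperNColoring n f ∧ ∀ v : V, f v ≠ 0} : ℚ) =
      (-1 : ℚ) ^ (Nat.card V - Γ.kAll) * (2 * (n : ℚ)) ^ Γ.kAll *
        Γ.signedTutte (1 - 2 * (n : ℚ)) 0 1 :=
  card_proper_n_colorings_general V E Γ n

end Statement
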